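/- Let L/F be either an infinite extension or a finite separable extension, and let S be a finite-dimensional F-subspace of L. If A and B are two distinct k-atoms of S, then dim_F(A ∩ B) ≤ k − 1. -/

import Mathlib

/-!
If `dim (A ⊓ B) ≥ k`, then `A ⊓ B` and `A ⊔ B` both lie in `𝒳_k`, and submodularity
`∂(A ⊓ B) + ∂(A ⊔ B) ≤ ∂A + ∂B` (from `(A ⊓ B)S ⊆ AS ⊓ BS` and `(A ⊔ B)S = AS + BS`) makes
`A ⊓ B` a fragment; minimality of atoms then gives `A = A ⊓ B = B`.

The only delicate point is `dim ((A ⊔ B)S) + k ≤ dim L`, which is void for infinite `L/F`.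
For finite separable `L/F` the trace form is nondegenerate and `(AS)^⊥ S ⊆ A^⊥`, so `(AS)^⊥` is
again a fragment; hence an atom satisfies `dim A + dim AS ≤ dim L`, and submodularity turns
this into the required bound for `A ⊔ B`.
-/

open Module Submodule

variable {F L : Type*} [Field F] [Field L] [Algebra F L]

/-- The boundary `∂_S X = dim(XS) - dim(X)` (as an integer). -/
noncomputable def deltaS (S X : Submodule F L) : ℤ :=
  (finrank F ↥(X * S) : ℤ) - finrank F ↥X

/-- Membership in the family `𝒳_k`: `k ≤ dim X < ∞` and `dim(XS) + k ≤ dim L`. -/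
def InXk (k : ℕ) (S X : Submodule F L) : Prop :=
  FiniteDimensional F ↥X ∧ k ≤ finrank F ↥X ∧
    ((finrank F ↥(X * S) + k : ℕ) : Cardinal) ≤ Module.rank F L

/-- A `k`-fragment of `S`: an element of `𝒳_k` attaining the minimum `κ_k(S)` of `∂_S`. -/
def IsFragment (k : ℕ) (S X : Submodule F L) : Prop :=
  InXk k S X ∧ ∀ Y : Submodule F L, InXk k S Y → deltaS S X ≤ deltaS S Y

/-- A `k`-atom of `S`: a `k`-fragment of minimum dimension. -/
def IsAtomk (k : ℕ) (S A : Submodule F L) : Prop :=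
  IsFragment k S A ∧ ∀ B : Submodule F L, IsFragment k S B → finrank F ↥A ≤ finrank F ↥B

instance Submodule.finiteDimensional_mul (X Y : Submodule F L) [FiniteDimensional F X]
    [FiniteDimensional F Y] : FiniteDimensional F ↥(X * Y) :=
  Module.Finite.iff_fg.mpr ((Module.Finite.iff_fg.mp ‹_›).mul (Module.Finite.iff_fg.mp ‹_›))

theorem traceForm_orthogonal_mul_le {R A : Type*} [CommRing R] [CommRing A] [Algebra R A]
    (X S : Submodule R A) :
    (Algebra.traceForm R A).orthogonal (X * S) * S ≤ (Algebra.traceForm R A).orthogonal X := by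
  refine Submodule.mul_le.mpr fun y hy s hs x hx => ?_
  have hxsy : Algebra.traceForm R A (x * s) y = 0 := hy _ (Submodule.mul_mem_mul hx hs)
  show Algebra.traceForm R A x (y * s) = 0
  rwa [Algebra.traceForm_apply, show x * (y * s) = x * s * y by ring, ← Algebra.traceForm_apply]

section Fragments

variable {k : ℕ} {S A B X : Submodule F L}

theorem IsFragment.deltaS_eq (hA : IsFragment k S A) (hB : IsFragment k S B) :
    deltaS S A = deltaS S B :=
  le_antisymm (hA.2 B hB.1) (hB.2 A hA.1)

theorem IsFragment.of_deltaS_le (hA : IsFragment k S A) (hX : InXk k S X)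
    (h : deltaS S X ≤ deltaS S A) : IsFragment k S X :=
  ⟨hX, fun Y hY => h.trans (hA.2 Y hY)⟩

theorem IsAtomk.finrank_eq (hA : IsAtomk k S A) (hB : IsAtomk k S B) :
    finrank F A = finrank F B :=
  le_antisymm (hA.2 B hB.1) (hB.2 A hA.1)

theorem IsAtomk.eq_of_le (hA : IsAtomk k S A) (hX : IsFragment k S X) (hXA : X ≤ A) : X = A :=
  haveI := hA.1.1.1
  Submodule.eq_of_le_of_finrank_le hXA (hA.2 X hX)

theorem InXk.inf [FiniteDimensional F S] (hA : InXk k S A) (hk : k ≤ finrank F ↥(A ⊓ B)) :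
    InXk k S (A ⊓ B) :=
  haveI := hA.1
  ⟨Submodule.finiteDimensional_of_le inf_le_left, hk, le_trans (Nat.cast_le.mpr
    (Nat.add_le_add_right (Submodule.finrank_mono (mul_le_mul_left inf_le_left S)) k)) hA.2.2⟩

theorem inXk_of_not_finiteDimensional (hL : ¬ FiniteDimensional F L)
    (hX : FiniteDimensional F X) (hk : k ≤ finrank F X) : InXk k S X := by
  refine ⟨hX, hk, Cardinal.natCast_lt_aleph0.le.trans ?_⟩
  rwa [← not_lt, Module.rank_lt_aleph0_iff]

theorem finrank_inf_mul_add_finrank_sup_mul_le [FiniteDimensional F S] (A B : Submodule F L)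
    [FiniteDimensional F A] [FiniteDimensional F B] :
    finrank F ↥((A ⊓ B) * S) + finrank F ↥((A ⊔ B) * S) ≤
      finrank F ↥(A * S) + finrank F ↥(B * S) := by
  have hinf : finrank F ↥((A ⊓ B) * S) ≤ finrank F ↥(A * S ⊓ B * S) :=
    Submodule.finrank_mono (le_inf (mul_le_mul_left inf_le_left S)
      (mul_le_mul_left inf_le_right S))
  have hmodular := Submodule.finrank_sup_add_finrank_inf_eq (A * S) (B * S)
  rw [Submodule.sup_mul]
  omega

theorem deltaS_inf_add_deltaS_sup_le [FiniteDimensional F S] (A B : Submodule F L)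
    [FiniteDimensional F A] [FiniteDimensional F B] :
    deltaS S (A ⊓ B) + deltaS S (A ⊔ B) ≤ deltaS S A + deltaS S B := by
  have hmul := finrank_inf_mul_add_finrank_sup_mul_le (S := S) A B
  have hdim := Submodule.finrank_sup_add_finrank_inf_eq A B
  unfold deltaS
  omega

theorem IsFragment.inf [FiniteDimensional F S] (hA : IsFragment k S A) (hB : IsFragment k S B)
    (hinf : InXk k S (A ⊓ B)) (hsup : InXk k S (A ⊔ B)) : IsFragment k S (A ⊓ B) :=
  haveI := hA.1.1
  haveI := hB.1.1
  hA.of_deltaS_le hinf (by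
    linarith [deltaS_inf_add_deltaS_sup_le (S := S) A B, hA.2 _ hsup, hA.deltaS_eq hB])

end Fragments

section FiniteExtension

variable [FiniteDimensional F L] {k : ℕ} {S A B : Submodule F L}

theorem inXk_iff_of_finiteDimensional :
    InXk k S A ↔ k ≤ finrank F A ∧ finrank F ↥(A * S) + k ≤ finrank F L := by
  rw [InXk, ← Module.finrank_eq_rank, Nat.cast_le]
  exact and_iff_right inferInstance

variable [Algebra.IsSeparable F L]

theorem InXk.traceForm_orthogonal_mul (hA : InXk k S A) :
    InXk k S ((Algebra.traceForm F L).orthogonal (A * S)) := by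
  rw [inXk_iff_of_finiteDimensional] at hA ⊢
  have hnd := traceForm_nondegenerate F L
  have hmul := Submodule.finrank_mono (traceForm_orthogonal_mul_le A S)
  rw [LinearMap.BilinForm.finrank_orthogonal hnd] at hmul ⊢
  have := Submodule.finrank_le A
  omega

theorem deltaS_traceForm_orthogonal_mul_le (A : Submodule F L) :
    deltaS S ((Algebra.traceForm F L).orthogonal (A * S)) ≤ deltaS S A := by
  have hnd := traceForm_nondegenerate F L
  have hmul := Submodule.finrank_mono (traceForm_orthogonal_mul_le A S)
  rw [LinearMap.BilinForm.finrank_orthogonal hnd] at hmul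
  have := Submodule.finrank_le A
  have := Submodule.finrank_le (A * S)
  unfold deltaS
  rw [LinearMap.BilinForm.finrank_orthogonal hnd]
  omega

theorem IsAtomk.finrank_add_finrank_mul_le (hA : IsAtomk k S A) :
    finrank F A + finrank F ↥(A * S) ≤ finrank F L := by
  have hdual := hA.2 _ (hA.1.of_deltaS_le hA.1.1.traceForm_orthogonal_mul
    (deltaS_traceForm_orthogonal_mul_le A))
  rw [LinearMap.BilinForm.finrank_orthogonal (traceForm_nondegenerate F L)] at hdual
  have := Submodule.finrank_le (A * S)
  omega

theorem IsAtomk.inXk_sup (hA : IsAtomk k S A) (hB : IsAtomk k S B)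
    (hk : k ≤ finrank F ↥(A ⊓ B)) : InXk k S (A ⊔ B) := by
  have hδ_inf := hA.1.2 _ (hA.1.1.inf hk)
  have hδ_eq := hA.1.deltaS_eq hB.1
  have hdim_eq := hA.finrank_eq hB
  have hB_dual := hB.finrank_add_finrank_mul_le
  have hmul := finrank_inf_mul_add_finrank_sup_mul_le (S := S) A B
  have hle_sup := Submodule.finrank_mono (inf_le_left.trans le_sup_left : A ⊓ B ≤ A ⊔ B)
  unfold deltaS at hδ_inf hδ_eq
  rw [inXk_iff_of_finiteDimensional]
  omega

end FiniteExtension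

theorem stmt6
    (hL : ¬ FiniteDimensional F L ∨ (FiniteDimensional F L ∧ Algebra.IsSeparable F L))
    (S : Submodule F L) (hS : FiniteDimensional F ↥S) (k : ℕ)
    (A B : Submodule F L) (hA : IsAtomk k S A) (hB : IsAtomk k S B) (hAB : A ≠ B) :
    (finrank F ↥(A ⊓ B) : ℤ) ≤ (k : ℤ) - 1 := by
  by_contra! hlt
  have hk : k ≤ finrank F ↥(A ⊓ B) := by omega
  have hsup : InXk k S (A ⊔ B) := by
    rcases hL with hL | ⟨_, _⟩
    · have := hA.1.1.1
      have := hB.1.1.1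
      exact inXk_of_not_finiteDimensional hL inferInstance
        (hk.trans (Submodule.finrank_mono (inf_le_left.trans le_sup_left)))
    · exact hA.inXk_sup hB hk
  have hfrag := hA.1.inf hB.1 (hA.1.1.inf hk) hsup
  exact hAB ((hA.eq_of_le hfrag inf_le_left).symm.trans (hB.eq_of_le hfrag inf_le_right))
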